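/- Let ε ∈ (0,1/2) and α ∈ (0,1/4) be constants, let m ≥ 1 be an integer with 2m ≥ 8·α^{−8}·ln(4/ε), and let 0 ≤ s₋ < s₊ ≤ 1 with s₊ − s₋ ≥ (3/2)·α⁴. Let X₊ and X₋ be independent binomial random variables with m trials each and success probabilities s₊ and s₋, respectively. Then P[X₊ ≤ X₋] < ε/2. -/

import Mathlib

open MeasureTheory

/-- The (possibly sub-)probability measure on `Bool` putting mass `p` on `true`
and mass `1 - p` on `false` (a Bernoulli distribution for `p ∈ [0,1]`). -/
noncomputable def bern (p : ℝ) : Measure Bool :=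
  ENNReal.ofReal p • Measure.dirac true + ENNReal.ofReal (1 - p) • Measure.dirac false

/-- The joint distribution of `m` independent Bernoulli(`p`) trials. -/
noncomputable def trials (m : ℕ) (p : ℝ) : Measure (Fin m → Bool) :=
  Measure.pi fun _ => bern p

/-- The number of successes among the trials: a binomial random variable. -/
def countTrue {m : ℕ} (f : Fin m → Bool) : ℕ := (Finset.univ.filter fun i => f i = true).card

/-! Chernoff bound: for `t ≥ 0`, `P[X₊ ≤ X₋] ≤ E[e^{-t X₊}] E[e^{t X₋}]`, and the binomial moment
generating function is `E[e^{c X}] = (s e^c + 1 - s)^m ≤ exp (m s (c + c²))` for `|c| ≤ 1`, by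
`1 + x ≤ eˣ` and `eᶜ - 1 ≤ c + c²`. With `t = α⁴/2` the exponent is at most
`m (-(s₊ - s₋) t + 2 t²) ≤ -m α⁸ / 4 ≤ -log (4 / ε)`. -/

open Real
open scoped ENNReal

instance (p : ℝ) : IsFiniteMeasure (bern p) :=
  ⟨by simp [bern]⟩

theorem lintegral_fintype_prod_eq_pow {ι E : Type*} [Fintype ι] [Fintype E] [MeasurableSpace E]
    [MeasurableSingletonClass E] (μ : Measure E) [SigmaFinite μ] (g : E → ℝ≥0∞) :
    ∫⁻ x, ∏ i, g (x i) ∂Measure.pi (fun _ : ι => μ) = (∫⁻ b, g b ∂μ) ^ Fintype.card ι := by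
  classical
  calc ∫⁻ x, ∏ i, g (x i) ∂Measure.pi (fun _ : ι => μ) = ∑ x : ι → E, ∏ i, g (x i) * μ {x i} := by
        rw [lintegral_fintype]
        congr! with x
        rw [← Set.univ_pi_singleton, Measure.pi_pi, Finset.prod_mul_distrib]
    _ = (∫⁻ b, g b ∂μ) ^ Fintype.card ι := by
        rw [← Fintype.prod_sum (fun (_ : ι) b => g b * μ {b}), Finset.prod_const,
          Finset.card_univ, lintegral_fintype]

theorem lintegral_bern (p : ℝ) (g : Bool → ℝ≥0∞) :
    ∫⁻ b, g b ∂bern p = ENNReal.ofReal p * g true + ENNReal.ofReal (1 - p) * g false := by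
  simp [bern, lintegral_add_measure, lintegral_smul_measure, lintegral_dirac]

theorem prod_ite_one_eq_pow_countTrue {M : Type*} [CommMonoid M] {m : ℕ} (x : M)
    (f : Fin m → Bool) : ∏ i, (if f i then x else 1) = x ^ countTrue f := by
  rw [Finset.prod_ite, Finset.prod_const, Finset.prod_const_one, mul_one, countTrue]

theorem lintegral_trials_pow_countTrue (m : ℕ) (p : ℝ) (x : ℝ≥0∞) :
    ∫⁻ f, x ^ countTrue f ∂trials m p = (ENNReal.ofReal p * x + ENNReal.ofReal (1 - p)) ^ m := by
  simp_rw [← prod_ite_one_eq_pow_countTrue]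
  refine (lintegral_fintype_prod_eq_pow (bern p) (fun b => if b then x else 1)).trans ?_
  simp [lintegral_bern]

theorem lintegral_trials_exp_mul_countTrue (m : ℕ) {p : ℝ} (hp0 : 0 ≤ p) (hp1 : p ≤ 1) (c : ℝ) :
    ∫⁻ f, ENNReal.ofReal (exp (c * countTrue f)) ∂trials m p
      = ENNReal.ofReal ((p * exp c + (1 - p)) ^ m) := by
  simp_rw [mul_comm c, exp_nat_mul, ENNReal.ofReal_pow (exp_pos c).le,
    lintegral_trials_pow_countTrue]
  rw [← ENNReal.ofReal_mul hp0, ← ENNReal.ofReal_add (by positivity) (sub_nonneg.2 hp1),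
    ENNReal.ofReal_pow (by positivity)]

theorem prod_setOf_le_le_lintegral_exp_mul {α β : Type*} [MeasurableSpace α] [MeasurableSpace β]
    (μ : Measure α) (ν : Measure β) [SFinite ν] {X : α → ℝ} {Y : β → ℝ} (hX : Measurable X)
    (hY : Measurable Y) {t : ℝ} (ht : 0 ≤ t) :
    μ.prod ν {z | X z.1 ≤ Y z.2}
      ≤ (∫⁻ a, ENNReal.ofReal (exp (-t * X a)) ∂μ) * ∫⁻ b, ENNReal.ofReal (exp (t * Y b)) ∂ν := by
  rw [← lintegral_prod_mul (by fun_prop) (by fun_prop)]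
  refine meas_le_lintegral₀ (by fun_prop) fun z (hz : X z.1 ≤ Y z.2) => ?_
  rw [← ENNReal.ofReal_mul (exp_pos _).le, ← exp_add, ENNReal.one_le_ofReal, one_le_exp_iff]
  nlinarith

theorem bernoulliMgf_pow_le_exp {p c : ℝ} (hp0 : 0 ≤ p) (hp1 : p ≤ 1) (hc : |c| ≤ 1) (m : ℕ) :
    (p * exp c + (1 - p)) ^ m ≤ exp (m * (p * (c + c ^ 2))) := by
  have hexp : exp c - 1 ≤ c + c ^ 2 := by
    linarith [(abs_le.1 (abs_exp_sub_one_sub_id_le hc)).2]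
  rw [exp_nat_mul]
  refine pow_le_pow_left₀ (by nlinarith [exp_pos c]) ?_ m
  calc p * exp c + (1 - p) = p * (exp c - 1) + 1 := by ring
    _ ≤ p * (c + c ^ 2) + 1 := by gcongr
    _ ≤ exp (p * (c + c ^ 2)) := add_one_le_exp _

theorem chernoff_exponent_le_neg_log {ε α p q : ℝ} {m : ℕ} (hα : α ≠ 0)
    (hmN : 8 / α ^ 8 * Real.log (4 / ε) ≤ 2 * m) (hp1 : p ≤ 1) (hq1 : q ≤ 1)
    (hgap : 3 / 2 * α ^ 4 ≤ p - q) :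
    m * (p * (-(α ^ 4 / 2) + (-(α ^ 4 / 2)) ^ 2)) + m * (q * (α ^ 4 / 2 + (α ^ 4 / 2) ^ 2))
      ≤ -Real.log (4 / ε) := by
  have hrate : p * (-(α ^ 4 / 2) + (-(α ^ 4 / 2)) ^ 2) + q * (α ^ 4 / 2 + (α ^ 4 / 2) ^ 2)
      ≤ -(α ^ 8 / 4) := by
    nlinarith [pow_nonneg (sq_nonneg α) 2]
  rw [div_mul_eq_mul_div, div_le_iff₀ (by positivity)] at hmN
  nlinarith [mul_le_mul_of_nonneg_left hrate m.cast_nonneg]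

theorem stmt8_general (ε α : ℝ) (hε : ε ∈ Set.Ioo (0 : ℝ) (1 / 2)) (hα : α ∈ Set.Ioo (0 : ℝ) (1 / 4))
    (m : ℕ) (hmN : 8 / α ^ 8 * Real.log (4 / ε) ≤ (2 * m : ℝ))
    (sMinus sPlus : ℝ) (h0 : 0 ≤ sMinus) (hlt : sMinus < sPlus) (h1 : sPlus ≤ 1)
    (hgap : (3 / 2) * α ^ 4 ≤ sPlus - sMinus) :
    (trials m sPlus).prod (trials m sMinus) {fg | countTrue fg.1 ≤ countTrue fg.2}
      < ENNReal.ofReal (ε / 2) := by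
  obtain ⟨hε0, -⟩ := hε
  obtain ⟨hα0, hα4⟩ := hα
  have hexponent := chernoff_exponent_le_neg_log hα0.ne' hmN h1 (hlt.le.trans h1) hgap
  have ht1 : |α ^ 4 / 2| ≤ 1 := by
    rw [abs_of_nonneg (by positivity)]
    nlinarith [pow_le_pow_left₀ hα0.le hα4.le 4]
  set t := α ^ 4 / 2
  calc (trials m sPlus).prod (trials m sMinus) {fg | countTrue fg.1 ≤ countTrue fg.2}
      ≤ (∫⁻ f, ENNReal.ofReal (exp (-t * countTrue f)) ∂trials m sPlus)
          * ∫⁻ g, ENNReal.ofReal (exp (t * countTrue g)) ∂trials m sMinus := by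
        simpa only [Nat.cast_le] using prod_setOf_le_le_lintegral_exp_mul (trials m sPlus)
          (trials m sMinus) (X := fun f => (countTrue f : ℝ)) (Y := fun g => (countTrue g : ℝ))
          .of_discrete .of_discrete (by positivity)
    _ = ENNReal.ofReal ((sPlus * exp (-t) + (1 - sPlus)) ^ m)
          * ENNReal.ofReal ((sMinus * exp t + (1 - sMinus)) ^ m) := by
        rw [lintegral_trials_exp_mul_countTrue m (h0.trans hlt.le) h1,
          lintegral_trials_exp_mul_countTrue m h0 (hlt.le.trans h1)]
    _ ≤ ENNReal.ofReal (exp (m * (sPlus * (-t + (-t) ^ 2))))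
          * ENNReal.ofReal (exp (m * (sMinus * (t + t ^ 2)))) := by
        gcongr
        · exact bernoulliMgf_pow_le_exp (h0.trans hlt.le) h1 (by rwa [abs_neg]) m
        · exact bernoulliMgf_pow_le_exp h0 (hlt.le.trans h1) ht1 m
    _ ≤ ENNReal.ofReal (exp (-Real.log (4 / ε))) := by
        rw [← ENNReal.ofReal_mul (exp_pos _).le, ← exp_add]
        gcongr
    _ = ENNReal.ofReal (ε / 4) := by rw [exp_neg, Real.exp_log (by positivity), inv_div]
    _ < ENNReal.ofReal (ε / 2) := by
        rw [ENNReal.ofReal_lt_ofReal_iff (by positivity)]; linarith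

theorem stmt8 (ε α : ℝ) (hε : ε ∈ Set.Ioo (0 : ℝ) (1 / 2)) (hα : α ∈ Set.Ioo (0 : ℝ) (1 / 4))
    (m : ℕ) (hm : 1 ≤ m) (hmN : 8 / α ^ 8 * Real.log (4 / ε) ≤ (2 * m : ℝ))
    (sMinus sPlus : ℝ) (h0 : 0 ≤ sMinus) (hlt : sMinus < sPlus) (h1 : sPlus ≤ 1)
    (hgap : (3 / 2) * α ^ 4 ≤ sPlus - sMinus) :
    (trials m sPlus).prod (trials m sMinus) {fg | countTrue fg.1 ≤ countTrue fg.2}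
      < ENNReal.ofReal (ε / 2) :=
  stmt8_general ε α hε hα m hmN sMinus sPlus h0 hlt h1 hgap
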